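/- For all real numbers a, b and all real p ≥ 2, |(a+b)/2|^p + |(a-b)/2|^p ≤ (|a|^p + |b|^p)/2. -/
import Mathlib

private lemma aux_add_rpow (x y : ℝ) (hx : 0 ≤ x) (hy : 0 ≤ y) {q : ℝ} (hq : 1 ≤ q) :
    x ^ q + y ^ q ≤ (x + y) ^ q := by
  have h := NNReal.add_rpow_le_rpow_add x.toNNReal y.toNNReal hq
  have := (NNReal.coe_le_coe).2 h
  simpa [NNReal.coe_rpow, Real.coe_toNNReal x hx, Real.coe_toNNReal y hy,
    Real.toNNReal_add hx hy] using this

private lemma aux_sq_rpow (x : ℝ) {p : ℝ} : (x ^ 2) ^ (p / 2) = |x| ^ p := by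
  rw [← sq_abs x, ← Real.rpow_natCast |x| 2, ← Real.rpow_mul (abs_nonneg x)]
  ring_nf

theorem stmt_1 (p : ℝ) (hp : 2 ≤ p) (a b : ℝ) :
    |(a + b) / 2| ^ p + |(a - b) / 2| ^ p ≤ (|a| ^ p + |b| ^ p)/2 := by
  have hq : (1:ℝ) ≤ p / 2 := by linarith
  have h1 : |(a + b) / 2| ^ p + |(a - b) / 2| ^ p
      ≤ (((a + b) / 2) ^ 2 + ((a - b) / 2) ^ 2) ^ (p / 2) := by
    rw [← aux_sq_rpow ((a+b)/2), ← aux_sq_rpow ((a-b)/2)]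
    exact aux_add_rpow _ _ (sq_nonneg _) (sq_nonneg _) hq
  have heq : ((a + b) / 2) ^ 2 + ((a - b) / 2) ^ 2 = (a ^ 2 + b ^ 2) / 2 := by ring
  have h2 : ((a ^ 2 + b ^ 2) / 2) ^ (p / 2) ≤ ((a ^ 2) ^ (p / 2) + (b ^ 2) ^ (p / 2)) / 2 := by
    have hc := (convexOn_rpow hq).2 (Set.mem_Ici.2 (sq_nonneg a))
      (Set.mem_Ici.2 (sq_nonneg b)) (by norm_num : (0:ℝ) ≤ 1/2) (by norm_num : (0:ℝ) ≤ 1/2)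
      (by norm_num)
    simpa [smul_eq_mul, div_eq_mul_inv, mul_comm, mul_add, add_mul] using hc
  calc |(a + b) / 2| ^ p + |(a - b) / 2| ^ p
      ≤ ((a ^ 2 + b ^ 2) / 2) ^ (p / 2) := by rwa [heq] at h1
    _ ≤ ((a ^ 2) ^ (p / 2) + (b ^ 2) ^ (p / 2)) / 2 := h2
    _ = (|a| ^ p + |b| ^ p) / 2 := by rw [aux_sq_rpow, aux_sq_rpow]
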